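/- arXiv:2605.23366 — 3 statements merged into one kernel-verified Lean document; each statement's English description precedes it below -/
import Mathlib

section
/- Let A > 0 and η > 2. Then ∫₀^∞ (1 − (1 + A r^{−η})^{−1/2}) r dr = (A^{2/η}/2) · Γ(1 − 2/η) Γ(1/2 + 2/η) / √π, where Γ is the Gamma function and the integral is with respect to Lebesgue measure on (0, ∞). -/
/-!
Substituting `u = A r^(-η)` turns the integral into
`A^(2/η) / η * ∫₀^∞ (1 - (1 + u)^(-p)) u^(-s-1) du` with `p = 1/2` and `s = 2/η ∈ (0, 1)`.
Integrating by parts against `u^(-s)` gives `p/s * ∫₀^∞ u^(-s) (1 + u)^(-(p+1)) du`: the boundary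
terms vanish because `0 ≤ 1 - (1 + u)^(-p) ≤ min 1 (p u)`. The last integral is the Beta integral
`B(1 - s, p + s) = Γ(1 - s) Γ(p + s) / (p Γ(p))`, which the substitution `u = x / (1 - x)` carries
to its usual form on `(0, 1)`; finally `Γ(1/2) = √π`.
-/

open MeasureTheory Real Set Filter Topology

theorem integral_Ioo_rpow_mul_one_sub_rpow {a b : ℝ} (ha : 0 < a) (hb : 0 < b) :
    ∫ x in Ioo (0 : ℝ) 1, x ^ (a - 1) * (1 - x) ^ (b - 1) =
      Gamma a * Gamma b / Gamma (a + b) := by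
  have h : ((∫ x in Ioo (0 : ℝ) 1, x ^ (a - 1) * (1 - x) ^ (b - 1) : ℝ) : ℂ) =
      Complex.betaIntegral a b := by
    rw [Complex.betaIntegral, intervalIntegral.integral_of_le zero_le_one,
      integral_Ioc_eq_integral_Ioo, ← integral_complex_ofReal]
    refine setIntegral_congr_fun measurableSet_Ioo fun x hx => ?_
    push_cast [Complex.ofReal_cpow hx.1.le, Complex.ofReal_cpow (sub_nonneg.2 hx.2.le)]
    rfl
  rw [Complex.betaIntegral_eq_Gamma_mul_div _ _ (by simpa) (by simpa), ← Complex.ofReal_add,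
    Complex.Gamma_ofReal, Complex.Gamma_ofReal, Complex.Gamma_ofReal] at h
  exact_mod_cast h

theorem integral_Ioi_eq_integral_Ioo_div_one_sub {E : Type*} [NormedAddCommGroup E]
    [NormedSpace ℝ E] (g : ℝ → E) :
    ∫ u in Ioi (0 : ℝ), g u = ∫ x in Ioo (0 : ℝ) 1, ((1 - x) ^ 2)⁻¹ • g (x / (1 - x)) := by
  have hderiv : ∀ x ∈ Ioo (0 : ℝ) 1,
      HasDerivWithinAt (fun x => x / (1 - x)) ((1 - x) ^ 2)⁻¹ (Ioo 0 1) x := fun x hx => by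
    have h₁ : 1 - x ≠ 0 := (sub_pos.2 hx.2).ne'
    refine ((hasDerivAt_id' x).div ((hasDerivAt_id' x).const_sub 1) h₁).hasDerivWithinAt
      |>.congr_deriv ?_
    field_simp
    ring
  have hinj : InjOn (fun x => x / (1 - x)) (Ioo (0 : ℝ) 1) := fun x hx y hy hxy => by
    have := (sub_pos.2 hx.2).ne'
    have := (sub_pos.2 hy.2).ne'
    field_simp at hxy
    linarith
  have himage : (fun x => x / (1 - x)) '' Ioo (0 : ℝ) 1 = Ioi 0 := by
    refine Subset.antisymm ?_ fun u (hu : 0 < u) => ⟨u / (1 + u), ⟨by positivity, ?_⟩, ?_⟩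
    · rintro _ ⟨x, hx, rfl⟩
      exact div_pos hx.1 (sub_pos.2 hx.2)
    · rw [div_lt_one (by positivity)]
      linarith
    · have : 1 + u ≠ 0 := by positivity
      field_simp
      ring
  rw [← himage, integral_image_eq_integral_abs_deriv_smul measurableSet_Ioo hderiv hinj]
  refine setIntegral_congr_fun measurableSet_Ioo fun x _ => ?_
  rw [abs_of_nonneg (by positivity)]

theorem integral_Ioi_rpow_mul_one_add_rpow_neg {a b : ℝ} (ha : 0 < a) (hb : 0 < b) :
    ∫ u in Ioi (0 : ℝ), u ^ (a - 1) * (1 + u) ^ (-(a + b)) =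
      Gamma a * Gamma b / Gamma (a + b) := by
  rw [integral_Ioi_eq_integral_Ioo_div_one_sub, ← integral_Ioo_rpow_mul_one_sub_rpow ha hb]
  refine setIntegral_congr_fun measurableSet_Ioo fun x hx => ?_
  have hx₀ : 0 < x := hx.1
  have hx₁ : 0 < 1 - x := sub_pos.2 hx.2
  have h : 1 + x / (1 - x) = (1 - x)⁻¹ := by
    field_simp
    ring
  rw [h, div_rpow hx₀.le hx₁.le, inv_rpow hx₁.le, rpow_neg hx₁.le, inv_inv, smul_eq_mul,
    ← rpow_natCast, ← rpow_neg hx₁.le, div_eq_mul_inv, ← rpow_neg hx₁.le]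
  calc (1 - x) ^ (-((2 : ℕ) : ℝ)) * (x ^ (a - 1) * (1 - x) ^ (-(a - 1)) * (1 - x) ^ (a + b))
      = x ^ (a - 1) *
          ((1 - x) ^ (-((2 : ℕ) : ℝ)) * (1 - x) ^ (-(a - 1)) * (1 - x) ^ (a + b)) := by
        ring
    _ = x ^ (a - 1) * (1 - x) ^ (b - 1) := by
        rw [← rpow_add hx₁, ← rpow_add hx₁]
        ring_nf

theorem one_sub_one_add_rpow_neg_nonneg {p u : ℝ} (hp : 0 ≤ p) (hu : 0 ≤ u) :
    0 ≤ 1 - (1 + u) ^ (-p) :=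
  sub_nonneg.2 (rpow_le_one_of_one_le_of_nonpos (by linarith) (neg_nonpos.2 hp))

theorem one_sub_one_add_rpow_neg_le_mul {p u : ℝ} (hp : 0 ≤ p) (hu : -1 < u) :
    1 - (1 + u) ^ (-p) ≤ p * u := by
  have hlog : log (1 + u) ≤ u := by linarith [log_le_sub_one_of_pos (by linarith : 0 < 1 + u)]
  have hexp := add_one_le_exp (log (1 + u) * -p)
  rw [rpow_def_of_pos (by linarith)]
  nlinarith

theorem integrableOn_Ioi_of_norm_le_rpow {f : ℝ → ℝ} {a b C D : ℝ} (ha : -1 < a) (hb : b < -1)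
    (hf : AEStronglyMeasurable f (volume.restrict (Ioi 0)))
    (h₀ : ∀ u ∈ Ioc (0 : ℝ) 1, ‖f u‖ ≤ C * u ^ a)
    (h₁ : ∀ u ∈ Ioi (1 : ℝ), ‖f u‖ ≤ D * u ^ b) :
    IntegrableOn f (Ioi 0) := by
  rw [← Ioc_union_Ioi_eq_Ioi zero_le_one] at hf ⊢
  refine IntegrableOn.union ?_ ?_
  · have hg : IntegrableOn (fun u => C * u ^ a) (Ioc (0 : ℝ) 1) :=
      ((intervalIntegrable_iff_integrableOn_Ioc_of_le zero_le_one).1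
        (intervalIntegral.intervalIntegrable_rpow' ha)).const_mul C
    exact hg.mono' (hf.mono_set subset_union_left) (ae_restrict_of_forall_mem measurableSet_Ioc h₀)
  · have hg : IntegrableOn (fun u => D * u ^ b) (Ioi (1 : ℝ)) :=
      (integrableOn_Ioi_rpow_of_lt hb one_pos).const_mul D
    exact hg.mono' (hf.mono_set subset_union_right) (ae_restrict_of_forall_mem measurableSet_Ioi h₁)

theorem integrableOn_Ioi_rpow_mul_one_add_rpow_neg {a b : ℝ} (ha : 0 < a) (hb : 0 < b) :
    IntegrableOn (fun u : ℝ => u ^ (a - 1) * (1 + u) ^ (-(a + b))) (Ioi 0) := by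
  refine integrableOn_Ioi_of_norm_le_rpow (C := 1) (D := 1) (by linarith : -1 < a - 1)
    (by linarith : -b - 1 < -1) (by fun_prop) (fun u hu => ?_) (fun u (hu : 1 < u) => ?_)
  · rw [norm_of_nonneg (by have := hu.1; positivity), one_mul]
    exact mul_le_of_le_one_right (rpow_nonneg hu.1.le _)
      (rpow_le_one_of_one_le_of_nonpos (by linarith [hu.1]) (by linarith))
  · have hu₀ : 0 < u := by linarith
    rw [norm_of_nonneg (by positivity), one_mul]
    calc u ^ (a - 1) * (1 + u) ^ (-(a + b)) ≤ u ^ (a - 1) * u ^ (-(a + b)) :=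
          mul_le_mul_of_nonneg_left (rpow_le_rpow_of_nonpos hu₀ (by linarith) (by linarith))
            (by positivity)
      _ = u ^ (-b - 1) := by
          rw [← rpow_add hu₀]
          ring_nf

section OneSubOneAddRpowNeg

variable {p s : ℝ}

theorem integrableOn_Ioi_one_sub_one_add_rpow_neg_mul_rpow (hp : 0 ≤ p) (hs₀ : 0 < s)
    (hs₁ : s < 1) :
    IntegrableOn (fun u : ℝ => (1 - (1 + u) ^ (-p)) * u ^ (-s - 1)) (Ioi 0) := by
  refine integrableOn_Ioi_of_norm_le_rpow (C := p) (D := 1) (by linarith : -1 < -s)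
    (by linarith : -s - 1 < -1) (by fun_prop) (fun u hu => ?_) (fun u (hu : 1 < u) => ?_)
  · have hu₀ : 0 < u := hu.1
    rw [norm_of_nonneg (mul_nonneg (one_sub_one_add_rpow_neg_nonneg hp hu₀.le) (by positivity))]
    calc (1 - (1 + u) ^ (-p)) * u ^ (-s - 1) ≤ p * u * u ^ (-s - 1) := by
          gcongr
          exact one_sub_one_add_rpow_neg_le_mul hp (by linarith)
      _ = p * u ^ (-s) := by
          rw [mul_assoc, ← rpow_one_add' hu₀.le (by linarith)]
          ring_nf
  · have hu₀ : 0 < u := by linarith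
    rw [norm_of_nonneg (mul_nonneg (one_sub_one_add_rpow_neg_nonneg hp hu₀.le) (by positivity)),
      one_mul]
    exact mul_le_of_le_one_left (by positivity)
      (by linarith [rpow_nonneg (by linarith : 0 ≤ 1 + u) (-p)])

theorem continuousWithinAt_one_sub_one_add_rpow_neg_mul_rpow_neg (hp : 0 ≤ p) (hs₁ : s < 1) :
    ContinuousWithinAt (fun u : ℝ => (1 - (1 + u) ^ (-p)) * u ^ (-s)) (Ici 0) 0 := by
  rw [← continuousWithinAt_Ioi_iff_Ici, ContinuousWithinAt]
  have hlim : Tendsto (fun u : ℝ => p * u ^ (1 - s)) (𝓝[>] 0) (𝓝 0) := by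
    have h := (continuousAt_rpow_const 0 (1 - s) (Or.inr (sub_pos.2 hs₁).le)).tendsto
    rw [zero_rpow (sub_pos.2 hs₁).ne'] at h
    simpa using (h.mono_left nhdsWithin_le_nhds).const_mul p
  simp only [add_zero, one_rpow, sub_self, zero_mul]
  refine squeeze_zero' (eventually_mem_nhdsWithin.mono fun u (hu : 0 < u) => ?_)
    (eventually_mem_nhdsWithin.mono fun u (hu : 0 < u) => ?_) hlim
  · exact mul_nonneg (one_sub_one_add_rpow_neg_nonneg hp hu.le) (rpow_nonneg hu.le _)
  · calc (1 - (1 + u) ^ (-p)) * u ^ (-s) ≤ p * u * u ^ (-s) := by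
          gcongr
          exact one_sub_one_add_rpow_neg_le_mul hp (by linarith)
      _ = p * u ^ (1 - s) := by
          rw [mul_assoc, ← rpow_one_add' hu.le (by linarith)]
          ring_nf

theorem tendsto_one_sub_one_add_rpow_neg_mul_rpow_neg_atTop (hp : 0 ≤ p) (hs₀ : 0 < s) :
    Tendsto (fun u : ℝ => (1 - (1 + u) ^ (-p)) * u ^ (-s)) atTop (𝓝 0) := by
  refine squeeze_zero' ((eventually_ge_atTop 0).mono fun u hu => ?_)
    ((eventually_ge_atTop 0).mono fun u hu => ?_) (tendsto_rpow_neg_atTop hs₀)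
  · exact mul_nonneg (one_sub_one_add_rpow_neg_nonneg hp hu) (rpow_nonneg hu _)
  · exact mul_le_of_le_one_left (by positivity)
      (by linarith [rpow_nonneg (by linarith : 0 ≤ 1 + u) (-p)])

theorem integral_Ioi_one_sub_one_add_rpow_neg_mul_rpow_eq (hp : 0 ≤ p) (hs₀ : 0 < s)
    (hs₁ : s < 1) :
    ∫ u in Ioi (0 : ℝ), (1 - (1 + u) ^ (-p)) * u ^ (-s - 1) =
      p / s * ∫ u in Ioi (0 : ℝ), u ^ (-s) * (1 + u) ^ (-(p + 1)) := by
  have hderiv : ∀ u ∈ Ioi (0 : ℝ), HasDerivAt (fun u : ℝ => (1 - (1 + u) ^ (-p)) * u ^ (-s))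
      (p * (u ^ (-s) * (1 + u) ^ (-(p + 1))) - s * ((1 - (1 + u) ^ (-p)) * u ^ (-s - 1))) u := by
    intro u (hu : 0 < u)
    have h₁ : HasDerivAt (fun u : ℝ => (1 + u) ^ (-p)) (-p * (1 + u) ^ (-p - 1)) u := by
      simpa using ((hasDerivAt_id' u).const_add 1).rpow_const (p := -p) (Or.inl (by linarith))
    have h₂ : HasDerivAt (fun u : ℝ => u ^ (-s)) (-s * u ^ (-s - 1)) u :=
      hasDerivAt_rpow_const (Or.inl hu.ne')
    refine (h₁.const_sub 1 |>.mul h₂).congr_deriv ?_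
    rw [show -p - 1 = -(p + 1) by ring]
    ring
  have hint_beta := integrableOn_Ioi_rpow_mul_one_add_rpow_neg (a := 1 - s) (b := p + s)
    (by linarith) (by linarith)
  rw [show 1 - s - 1 = -s by ring, show -(1 - s + (p + s)) = -(p + 1) by ring] at hint_beta
  have hint := integrableOn_Ioi_one_sub_one_add_rpow_neg_mul_rpow hp hs₀ hs₁
  have hparts := integral_Ioi_of_hasDerivAt_of_tendsto
    (continuousWithinAt_one_sub_one_add_rpow_neg_mul_rpow_neg hp hs₁) hderiv
    ((hint_beta.const_mul p).sub (hint.const_mul s))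
    (tendsto_one_sub_one_add_rpow_neg_mul_rpow_neg_atTop hp hs₀)
  rw [integral_sub (hint_beta.const_mul p) (hint.const_mul s), integral_const_mul,
    integral_const_mul] at hparts
  simp only [add_zero, one_rpow, sub_self, zero_mul] at hparts
  field_simp
  linarith

theorem integral_Ioi_one_sub_one_add_rpow_neg_mul_rpow (hp : 0 < p) (hs₀ : 0 < s)
    (hs₁ : s < 1) :
    ∫ u in Ioi (0 : ℝ), (1 - (1 + u) ^ (-p)) * u ^ (-s - 1) =
      Gamma (1 - s) * Gamma (p + s) / (s * Gamma p) := by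
  have hbeta := integral_Ioi_rpow_mul_one_add_rpow_neg (a := 1 - s) (b := p + s)
    (by linarith) (by linarith)
  rw [show 1 - s - 1 = -s by ring, show 1 - s + (p + s) = p + 1 by ring,
    Gamma_add_one hp.ne'] at hbeta
  rw [integral_Ioi_one_sub_one_add_rpow_neg_mul_rpow_eq hp.le hs₀ hs₁, hbeta]
  have := (Gamma_pos_of_pos hp).ne'
  field_simp

end OneSubOneAddRpowNeg

theorem integral_Ioi_comp_mul_rpow_neg_mul_rpow (f : ℝ → ℝ) {A η : ℝ} (hA : 0 < A)
    (hη : 0 < η) (c : ℝ) :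
    ∫ r in Ioi (0 : ℝ), f (A * r ^ (-η)) * r ^ (c - 1) =
      A ^ (c / η) / η * ∫ u in Ioi (0 : ℝ), f u * u ^ (-(c / η) - 1) := by
  have hsubst := integral_comp_rpow_Ioi (fun t => f (A * t) * t ^ (-(c / η) - 1))
    (neg_ne_zero.2 hη.ne')
  have hscale := integral_comp_mul_left_Ioi (fun u => f u * u ^ (-(c / η) - 1)) 0 hA
  simp only [mul_zero, smul_eq_mul, abs_neg, abs_of_pos hη] at hsubst hscale
  calc ∫ r in Ioi (0 : ℝ), f (A * r ^ (-η)) * r ^ (c - 1)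
      = ∫ r in Ioi (0 : ℝ), η⁻¹ *
          (η * r ^ (-η - 1) * (f (A * r ^ (-η)) * (r ^ (-η)) ^ (-(c / η) - 1))) := by
        refine setIntegral_congr_fun measurableSet_Ioi fun r (hr : 0 < r) => ?_
        have he : c - 1 = -η - 1 + -η * (-(c / η) - 1) := by
          field_simp
          ring
        rw [he, rpow_add hr, rpow_mul hr.le]
        field_simp
    _ = η⁻¹ * ∫ t in Ioi (0 : ℝ),
          A ^ (c / η + 1) * (f (A * t) * (A * t) ^ (-(c / η) - 1)) := by
        rw [integral_const_mul, hsubst]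
        congr 1
        refine setIntegral_congr_fun measurableSet_Ioi fun t (ht : 0 < t) => ?_
        rw [mul_rpow hA.le ht.le, show -(c / η) - 1 = -(c / η + 1) by ring, rpow_neg hA.le]
        field_simp
    _ = A ^ (c / η) / η * ∫ u in Ioi (0 : ℝ), f u * u ^ (-(c / η) - 1) := by
        rw [integral_const_mul, hscale, rpow_add hA, rpow_one]
        field_simp

/-- **Lemma 2 of the paper.** For `A > 0` and `η > 2`,
`∫₀^∞ (1 - (1 + A r^(-η))^(-1/2)) r dr = (A^(2/η)/2) Γ(1 - 2/η) Γ(1/2 + 2/η) / √π`. -/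
theorem interference_integral_closed_form (A η : ℝ) (hA : 0 < A) (hη : 2 < η) :
    ∫ r in Set.Ioi (0 : ℝ), (1 - (1 + A * r ^ (-η)) ^ (-(1 / 2) : ℝ)) * r =
      A ^ (2 / η) / 2 *
        (Real.Gamma (1 - 2 / η) * Real.Gamma (1 / 2 + 2 / η) / Real.sqrt Real.pi) := by
  have hη₀ : 0 < η := by linarith
  have hs₀ : 0 < 2 / η := by positivity
  have hs₁ : 2 / η < 1 := (div_lt_one hη₀).2 hη
  calc ∫ r in Ioi (0 : ℝ), (1 - (1 + A * r ^ (-η)) ^ (-(1 / 2) : ℝ)) * r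
      = ∫ r in Ioi (0 : ℝ), (1 - (1 + A * r ^ (-η)) ^ (-(1 / 2) : ℝ)) * r ^ ((2 : ℝ) - 1) := by
        norm_num
    _ = A ^ (2 / η) / η *
          ∫ u in Ioi (0 : ℝ), (1 - (1 + u) ^ (-(1 / 2) : ℝ)) * u ^ (-(2 / η) - 1) :=
        integral_Ioi_comp_mul_rpow_neg_mul_rpow (fun u => 1 - (1 + u) ^ (-(1 / 2) : ℝ)) hA hη₀ 2
    _ = _ := by
        rw [integral_Ioi_one_sub_one_add_rpow_neg_mul_rpow one_half_pos hs₀ hs₁,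
          Gamma_one_half_eq]
        field_simp
end

section
/- Let η > 2, let m₀ ≥ 1 be an integer, and let H_1, …, H_{m₀} > 0. For Λ > 0 define R̄_cell(Λ) = ∑_{k=1}^{m₀} (−1)^{k+1} C(m₀, k) ∫₀^∞ (1+x)^{−1} (Λ^{−1} + H_k x^{2/η})^{−1} dx, where C(m₀, k) is the binomial coefficient and the integrals are with respect to Lebesgue measure on (0, ∞). Then lim_{Λ→∞} R̄_cell(Λ) = (π / sin(2π/η)) · ∑_{k=1}^{m₀} (−1)^{k+1} C(m₀, k) / H_k. -/
/-!
For `Λ → ∞` the integrand increases to `(1 + x)⁻¹ (H x^a)⁻¹` with `a = 2/η ∈ (0, 1)`, which is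
integrable, so dominated convergence applies. The limiting integral is a Beta integral of the
second kind: substituting `x = t / (1 - t)` turns it into `B(1 - a, a) = Γ(1 - a) Γ(a)`, which
is `π / sin (π a)` by Euler's reflection formula.
-/

open MeasureTheory Filter Set Real Topology

theorem integral_Ioo_rpow_mul_one_sub_rpow_s9 {u v : ℝ} (hu : 0 < u) (hv : 0 < v) :
    ∫ t in Ioo (0 : ℝ) 1, t ^ (u - 1) * (1 - t) ^ (v - 1) = Gamma u * Gamma v / Gamma (u + v) := by
  have hB : Complex.betaIntegral u v =
      ((∫ t in Ioo (0 : ℝ) 1, t ^ (u - 1) * (1 - t) ^ (v - 1) : ℝ) : ℂ) := by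
    rw [Complex.betaIntegral, intervalIntegral.integral_of_le zero_le_one,
      integral_Ioc_eq_integral_Ioo, ← integral_complex_ofReal]
    refine setIntegral_congr_fun measurableSet_Ioo fun t ⟨ht0, ht1⟩ => ?_
    push_cast
    rw [Complex.ofReal_cpow ht0.le, Complex.ofReal_cpow (by linarith)]
    push_cast
    rfl
  have := Complex.betaIntegral_eq_Gamma_mul_div u v (by simpa) (by simpa)
  rw [hB, ← Complex.ofReal_add, Complex.Gamma_ofReal, Complex.Gamma_ofReal,
    Complex.Gamma_ofReal] at this
  exact_mod_cast this

lemma image_div_one_sub_Ioo : (fun t : ℝ => t / (1 - t)) '' Ioo 0 1 = Ioi 0 := by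
  ext x
  constructor
  · rintro ⟨t, ⟨ht0, ht1⟩, rfl⟩
    exact div_pos ht0 (sub_pos.2 ht1)
  · intro (hx : 0 < x)
    have hx1 : 0 < 1 + x := by linarith
    refine ⟨x / (1 + x), ⟨div_pos hx hx1, (div_lt_one hx1).2 (by linarith)⟩, ?_⟩
    field_simp
    ring

lemma injOn_div_one_sub_Ioo : InjOn (fun t : ℝ => t / (1 - t)) (Ioo 0 1) := by
  rintro t ⟨-, ht⟩ s ⟨-, hs⟩ h
  have ht' : 1 - t ≠ 0 := (sub_pos.2 ht).ne'
  have hs' : 1 - s ≠ 0 := (sub_pos.2 hs).ne'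
  field_simp at h
  linarith

lemma hasDerivAt_div_one_sub {t : ℝ} (ht : t ≠ 1) :
    HasDerivAt (fun t : ℝ => t / (1 - t)) ((1 - t) ^ 2)⁻¹ t := by
  have ht' : 1 - t ≠ 0 := sub_ne_zero.2 ht.symm
  refine ((hasDerivAt_id' t).fun_div ((hasDerivAt_id' t).const_sub 1) ht').congr_deriv ?_
  field_simp
  ring

theorem integral_Ioi_rpow_mul_one_add_rpow (u v : ℝ) :
    ∫ x in Ioi (0 : ℝ), x ^ (u - 1) * (1 + x) ^ (-(u + v)) =
      ∫ t in Ioo (0 : ℝ) 1, t ^ (u - 1) * (1 - t) ^ (v - 1) := by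
  rw [← image_div_one_sub_Ioo, integral_image_eq_integral_abs_deriv_smul measurableSet_Ioo
    (fun t ht => (hasDerivAt_div_one_sub ht.2.ne).hasDerivWithinAt) injOn_div_one_sub_Ioo]
  refine setIntegral_congr_fun measurableSet_Ioo fun t ⟨ht0, ht1⟩ => ?_
  have hs : 0 < 1 - t := sub_pos.2 ht1
  have h1 : 1 + t / (1 - t) = (1 - t)⁻¹ := by field_simp; ring
  have h2 : (1 - t) ^ (v - 1) = (1 - t) ^ (u + v) / ((1 - t) ^ (u - 1) * (1 - t) ^ 2) := by
    rw [← rpow_natCast, ← rpow_add hs, ← rpow_sub hs]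
    congr 1
    push_cast
    ring
  rw [smul_eq_mul, abs_of_pos (by positivity), h1, div_rpow ht0.le hs.le, inv_rpow hs.le,
    rpow_neg hs.le, inv_inv, h2]
  field_simp

theorem integral_Ioi_one_add_inv_mul_rpow_neg {a : ℝ} (ha : 0 < a) (ha1 : a < 1) :
    ∫ x in Ioi (0 : ℝ), (1 + x)⁻¹ * x ^ (-a) = π / sin (π * a) := by
  have h := integral_Ioi_rpow_mul_one_add_rpow (1 - a) a
  rw [integral_Ioo_rpow_mul_one_sub_rpow_s9 (by linarith) ha, sub_add_cancel, Gamma_one, div_one,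
    mul_comm, Gamma_mul_Gamma_one_sub] at h
  rw [← h]
  refine setIntegral_congr_fun measurableSet_Ioi fun x _ => ?_
  rw [sub_sub_cancel_left, rpow_neg_one, mul_comm]

theorem tendsto_integral_one_add_inv_mul_inv_add_mul_rpow {a c : ℝ} (ha : 0 < a) (ha1 : a < 1)
    (hc : 0 < c) :
    Tendsto (fun Λ : ℝ => ∫ x in Ioi (0 : ℝ), (1 + x)⁻¹ * (Λ⁻¹ + c * x ^ a)⁻¹) atTop
      (𝓝 (π / sin (π * a) / c)) := by
  have hlim : ∫ x in Ioi (0 : ℝ), (1 + x)⁻¹ * (c * x ^ a)⁻¹ = π / sin (π * a) / c := by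
    rw [div_eq_inv_mul _ c, ← integral_Ioi_one_add_inv_mul_rpow_neg ha ha1, ← integral_const_mul]
    refine setIntegral_congr_fun measurableSet_Ioi fun x (hx : 0 < x) => ?_
    rw [mul_inv, rpow_neg hx.le]
    ring
  have hpos : 0 < π / sin (π * a) / c := by
    have : 0 < sin (π * a) := sin_pos_of_pos_of_lt_pi (by positivity) (by nlinarith [pi_pos])
    positivity
  rw [← hlim]
  -- The limit integrand dominates; it is integrable because its integral is nonzero.
  refine tendsto_integral_filter_of_dominated_convergence _ ?_ ?_
    (Integrable.of_integral_ne_zero (hlim ▸ hpos.ne')) ?_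
  · exact Eventually.of_forall fun Λ => by fun_prop
  · filter_upwards [eventually_gt_atTop 0] with Λ hΛ
    refine (ae_restrict_iff' measurableSet_Ioi).2 (Eventually.of_forall fun x (hx : 0 < x) => ?_)
    rw [norm_of_nonneg (by positivity)]
    gcongr
    linarith [inv_pos.2 hΛ]
  · refine (ae_restrict_iff' measurableSet_Ioi).2 (Eventually.of_forall fun x (hx : 0 < x) => ?_)
    have hden : 0 < c * x ^ a := by positivity
    have := (tendsto_inv_atTop_zero.add_const (c * x ^ a)).inv₀ (by simpa using hden.ne')
    simpa using this.const_mul (1 + x)⁻¹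

theorem cell_sum_rate_saturation_general (η : ℝ) (hη : 2 < η) (m₀ : ℕ)
    (H : ℕ → ℝ) (hH : ∀ k ∈ Finset.Icc 1 m₀, 0 < H k) :
    Tendsto
      (fun Λ : ℝ => ∑ k ∈ Finset.Icc 1 m₀,
        (-1 : ℝ) ^ (k + 1) * (m₀.choose k : ℝ) *
          ∫ x in Set.Ioi (0 : ℝ), (1 + x)⁻¹ * (Λ⁻¹ + H k * x ^ (2 / η))⁻¹)
      atTop
      (nhds (Real.pi / Real.sin (2 * Real.pi / η) *
        ∑ k ∈ Finset.Icc 1 m₀, (-1 : ℝ) ^ (k + 1) * (m₀.choose k : ℝ) / H k)) := by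
  have hη₀ : 0 < η := by linarith
  have ha : 0 < 2 / η := by positivity
  have ha1 : 2 / η < 1 := (div_lt_one hη₀).2 hη
  have h := tendsto_finsetSum (Finset.Icc 1 m₀) fun k hk =>
    (tendsto_integral_one_add_inv_mul_inv_add_mul_rpow ha ha1 (hH k hk)).const_mul
      ((-1 : ℝ) ^ (k + 1) * (m₀.choose k : ℝ))
  convert h using 2
  rw [show 2 * π / η = π * (2 / η) by ring, Finset.mul_sum]
  exact Finset.sum_congr rfl fun k _ => by ring

/-- **Corollary 1 of the paper.** Let `η > 2`, `m₀ ≥ 1`, and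
`H_1, …, H_{m₀} > 0`. With
`R̄_cell(Λ) = ∑_{k=1}^{m₀} (-1)^(k+1) C(m₀,k) ∫₀^∞ (1+x)⁻¹ (Λ⁻¹ + H_k x^(2/η))⁻¹ dx`,
we have `lim_{Λ → ∞} R̄_cell(Λ) = (π / sin(2π/η)) ∑_{k=1}^{m₀} (-1)^(k+1) C(m₀,k) / H_k`. -/
theorem cell_sum_rate_saturation (η : ℝ) (hη : 2 < η) (m₀ : ℕ) (hm : 1 ≤ m₀)
    (H : ℕ → ℝ) (hH : ∀ k ∈ Finset.Icc 1 m₀, 0 < H k) :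
    Tendsto
      (fun Λ : ℝ => ∑ k ∈ Finset.Icc 1 m₀,
        (-1 : ℝ) ^ (k + 1) * (m₀.choose k : ℝ) *
          ∫ x in Set.Ioi (0 : ℝ), (1 + x)⁻¹ * (Λ⁻¹ + H k * x ^ (2 / η))⁻¹)
      atTop
      (nhds (Real.pi / Real.sin (2 * Real.pi / η) *
        ∑ k ∈ Finset.Icc 1 m₀, (-1 : ℝ) ^ (k + 1) * (m₀.choose k : ℝ) / H k)) :=
  cell_sum_rate_saturation_general η hη m₀ H hH
end

section
/- Let 2 < η < 4 and H > 0. For Λ > 0 define Δ(Λ) = ∫₀^∞ (1+x)^{−1} [ (H x^{2/η})^{−1} − (Λ^{−1} + H x^{2/η})^{−1} ] dx, with the integral taken with respect to Lebesgue measure on (0, ∞). Then lim_{Λ→∞} Λ^{η/2 − 1} Δ(Λ) = H^{−η/2} ∫₀^∞ t^{−2/η} (1 + t^{2/η})^{−1} dt; in particular Δ(Λ) = O(Λ^{1 − η/2}) as Λ → ∞. -/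
/-!
The substitution `x = c t` with `c = (Λ H)^(-η/2)` turns `H x^(2/η)` into `Λ⁻¹ t^(2/η)`, so that
`Λ^(η/2-1) Δ(Λ) = H^(-η/2) ∫₀^∞ (1 + c t)⁻¹ t^(-2/η) (1 + t^(2/η))⁻¹ dt`.
As `Λ → ∞` we have `c → 0`, and the factor `(1 + c t)⁻¹ ≤ 1` lets dominated convergence pass to
the limit; the dominating function is integrable because `t^(-2/η)` is integrable at `0` and
`t^(-4/η)` at `∞` exactly when `2 < η < 4`.
-/

open MeasureTheory Filter Asymptotics Set

lemma integrableOn_rpow_neg_mul_inv_one_add_rpow {a : ℝ} (ha₁ : 1 / 2 < a) (ha₂ : a < 1) :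
    IntegrableOn (fun t : ℝ => t ^ (-a) * (1 + t ^ a)⁻¹) (Ioi 0) := by
  have hcont : ContinuousOn (fun t : ℝ => t ^ (-a) * (1 + t ^ a)⁻¹) (Ioi 0) := by
    intro t (ht : 0 < t)
    have : (1 : ℝ) + t ^ a ≠ 0 := by positivity
    exact ((Real.continuousAt_rpow_const t _ (.inl ht.ne')).mul
      ((continuousAt_const.add (Real.continuousAt_rpow_const t _ (.inl ht.ne'))).inv₀ this))
      |>.continuousWithinAt
  have h_near_zero : IntegrableOn (fun t : ℝ => t ^ (-a)) (Ioc 0 1) :=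
    (intervalIntegral.intervalIntegrable_rpow' (by linarith)).1
  have h_near_top : IntegrableOn (fun t : ℝ => t ^ (-(2 * a))) (Ioi 1) :=
    integrableOn_Ioi_rpow_of_lt (by linarith) one_pos
  rw [← Ioc_union_Ioi_eq_Ioi zero_le_one]
  refine IntegrableOn.union (h_near_zero.mono'
    ((hcont.mono Ioc_subset_Ioi_self).aestronglyMeasurable measurableSet_Ioc) ?_)
    (h_near_top.mono'
      ((hcont.mono (Ioi_subset_Ioi zero_le_one)).aestronglyMeasurable measurableSet_Ioi) ?_)
  · filter_upwards [ae_restrict_mem measurableSet_Ioc] with t ⟨ht, _⟩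
    rw [Real.norm_of_nonneg (by positivity)]
    exact mul_le_of_le_one_right (by positivity) (inv_le_one_of_one_le₀ (by simp; positivity))
  · filter_upwards [ae_restrict_mem measurableSet_Ioi] with t (ht : 1 < t)
    have ht₀ : 0 < t := one_pos.trans ht
    rw [Real.norm_of_nonneg (by positivity), show -(2 * a) = -a + -a by ring,
      Real.rpow_add ht₀, Real.rpow_neg ht₀.le a]
    gcongr
    linarith

lemma tendsto_setIntegral_inv_one_add_mul {ι : Type*} {l : Filter ι} [l.IsCountablyGenerated]
    {c : ι → ℝ} {g : ℝ → ℝ} (hc : Tendsto c l (nhds 0)) (hc₀ : ∀ᶠ i in l, 0 ≤ c i)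
    (hg : IntegrableOn g (Ioi 0)) :
    Tendsto (fun i => ∫ t in Ioi 0, (1 + c i * t)⁻¹ * g t) l (nhds (∫ t in Ioi 0, g t)) := by
  refine tendsto_integral_filter_of_dominated_convergence (fun t => ‖g t‖) ?_ ?_ hg.norm ?_
  · exact .of_forall fun i => (by fun_prop : Measurable fun t : ℝ => (1 + c i * t)⁻¹)
      |>.aestronglyMeasurable.mul hg.1
  · filter_upwards [hc₀] with i hi
    filter_upwards [ae_restrict_mem measurableSet_Ioi] with t (ht : 0 < t)
    rw [norm_mul, Real.norm_of_nonneg (by positivity)]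
    exact mul_le_of_le_one_left (norm_nonneg _)
      (inv_le_one_of_one_le₀ (le_add_of_nonneg_right (by positivity)))
  · refine .of_forall fun t => ?_
    simpa using ((hc.mul_const t).const_add 1).inv₀ (by simp) |>.mul_const (g t)

section Rescaling

variable {η H Λ : ℝ}

lemma gap_integrand_comp_mul {a c t : ℝ} (hΛ : 0 < Λ) (hc : 0 ≤ c) (ht : 0 < t)
    (hcH : H * c ^ a = Λ⁻¹) :
    (1 + c * t)⁻¹ * ((H * (c * t) ^ a)⁻¹ - (Λ⁻¹ + H * (c * t) ^ a)⁻¹)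
      = Λ * ((1 + c * t)⁻¹ * (t ^ (-a) * (1 + t ^ a)⁻¹)) := by
  have hu : 0 < t ^ a := Real.rpow_pos_of_pos ht a
  rw [Real.mul_rpow hc ht.le, ← mul_assoc, hcH, Real.rpow_neg ht.le]
  field_simp
  ring

lemma setIntegral_gap_eq (hη : η ≠ 0) (hH : 0 < H) (hΛ : 0 < Λ) :
    ∫ x in Ioi (0 : ℝ), (1 + x)⁻¹ * ((H * x ^ (2 / η))⁻¹ - (Λ⁻¹ + H * x ^ (2 / η))⁻¹)
      = Λ * (Λ * H) ^ (-(η / 2)) * ∫ t in Ioi (0 : ℝ),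
          (1 + (Λ * H) ^ (-(η / 2)) * t)⁻¹ * (t ^ (-(2 / η)) * (1 + t ^ (2 / η))⁻¹) := by
  set c := (Λ * H) ^ (-(η / 2))
  have hc : 0 < c := Real.rpow_pos_of_pos (mul_pos hΛ hH) _
  have hcH : H * c ^ (2 / η) = Λ⁻¹ := by
    rw [← Real.rpow_mul (mul_pos hΛ hH).le, show -(η / 2) * (2 / η) = -1 by field_simp,
      Real.rpow_neg_one]
    field_simp
  have hsubst := integral_comp_mul_left_Ioi
    (fun x => (1 + x)⁻¹ * ((H * x ^ (2 / η))⁻¹ - (Λ⁻¹ + H * x ^ (2 / η))⁻¹)) 0 hc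
  rw [mul_zero, smul_eq_mul, eq_inv_mul_iff_mul_eq₀ hc.ne',
    setIntegral_congr_fun measurableSet_Ioi fun t ht => gap_integrand_comp_mul hΛ hc.le ht hcH,
    integral_const_mul] at hsubst
  rw [← hsubst]
  ring

lemma rpow_sub_one_mul_mul_rpow_neg (hH : 0 < H) (hΛ : 0 < Λ) :
    Λ ^ (η / 2 - 1) * (Λ * (Λ * H) ^ (-(η / 2))) = H ^ (-(η / 2)) := by
  rw [Real.mul_rpow hΛ.le hH.le, Real.rpow_neg hΛ.le, Real.rpow_sub_one hΛ.ne']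
  field_simp

end Rescaling

lemma isBigO_rpow_of_tendsto_rpow_mul {f : ℝ → ℝ} {p q L : ℝ} (hpq : p + q = 0)
    (hf : Tendsto (fun x => x ^ p * f x) atTop (nhds L)) :
    f =O[atTop] fun x => x ^ q := by
  refine ((isBigO_refl (fun x : ℝ => x ^ q) atTop).mul (hf.isBigO_one ℝ)).congr' ?_ (by simp)
  filter_upwards [eventually_gt_atTop 0] with x hx
  rw [← mul_assoc, ← Real.rpow_add hx, add_comm, hpq, Real.rpow_zero, one_mul]

/-- **Corollary 2 of the paper.** Let `2 < η < 4` and `H > 0`. For `Λ > 0` let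
`Δ(Λ) = ∫₀^∞ (1+x)⁻¹ [(H x^(2/η))⁻¹ - (Λ⁻¹ + H x^(2/η))⁻¹] dx`. Then
`lim_{Λ→∞} Λ^(η/2 - 1) Δ(Λ) = H^(-η/2) ∫₀^∞ t^(-2/η) (1 + t^(2/η))⁻¹ dt`;
in particular `Δ(Λ) = O(Λ^(1 - η/2))` as `Λ → ∞`. -/
theorem gap_term_convergence_rate (η H : ℝ) (hη1 : 2 < η) (hη2 : η < 4) (hH : 0 < H) :
    Tendsto
      (fun Λ : ℝ => Λ ^ (η / 2 - 1) *
        ∫ x in Set.Ioi (0 : ℝ),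
          (1 + x)⁻¹ * ((H * x ^ (2 / η))⁻¹ - (Λ⁻¹ + H * x ^ (2 / η))⁻¹))
      atTop
      (nhds (H ^ (-(η / 2)) *
        ∫ t in Set.Ioi (0 : ℝ), t ^ (-(2 / η)) * (1 + t ^ (2 / η))⁻¹)) ∧
    (fun Λ : ℝ => ∫ x in Set.Ioi (0 : ℝ),
        (1 + x)⁻¹ * ((H * x ^ (2 / η))⁻¹ - (Λ⁻¹ + H * x ^ (2 / η))⁻¹))
      =O[atTop] fun Λ : ℝ => Λ ^ (1 - η / 2) := by
  have hη₀ : 0 < η := by linarith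
  have hint := integrableOn_rpow_neg_mul_inv_one_add_rpow (a := 2 / η)
    (by rw [lt_div_iff₀ hη₀]; linarith) (by rw [div_lt_one hη₀]; exact hη1)
  have hc : Tendsto (fun Λ : ℝ => (Λ * H) ^ (-(η / 2))) atTop (nhds 0) :=
    (tendsto_rpow_neg_atTop (by positivity)).comp (tendsto_id.atTop_mul_const hH)
  have hc₀ : ∀ᶠ Λ : ℝ in atTop, 0 ≤ (Λ * H) ^ (-(η / 2)) := by
    filter_upwards [eventually_ge_atTop 0] with Λ hΛ using Real.rpow_nonneg (by positivity) _
  have hlim : Tendsto (fun Λ : ℝ => Λ ^ (η / 2 - 1) *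
      ∫ x in Ioi (0 : ℝ), (1 + x)⁻¹ * ((H * x ^ (2 / η))⁻¹ - (Λ⁻¹ + H * x ^ (2 / η))⁻¹))
      atTop (nhds (H ^ (-(η / 2)) *
        ∫ t in Ioi (0 : ℝ), t ^ (-(2 / η)) * (1 + t ^ (2 / η))⁻¹)) := by
    refine ((tendsto_setIntegral_inv_one_add_mul hc hc₀ hint).const_mul _).congr' ?_
    filter_upwards [eventually_gt_atTop 0] with Λ hΛ
    rw [setIntegral_gap_eq hη₀.ne' hH hΛ, ← mul_assoc, rpow_sub_one_mul_mul_rpow_neg hH hΛ]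
  exact ⟨hlim, isBigO_rpow_of_tendsto_rpow_mul (by ring) hlim⟩
end
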